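/- For all α ≥ 0, d, k ≥ 1, K ≥ 1 and M ≥ 0, there exists a constant c = c(α,k,d,K,M) ≥ 1 such that for every set A ⊆ ℝ^k and every (K,M)-quasi-isometric embedding f : A → ℝ^d, the counting measures satisfy C^{α}(A) ≤ c · C^{α}(f(A)) and C^{α}(f(A)) ≤ c · C^{α}(A) (as elements of [0,∞]). In particular, A is α-counting regular if and only if f(A) is α-counting regular, and cdim(A) = cdim(f(A)). -/

import Mathlib

open Set MeasureTheory Filter
open scoped ENNReal NNReal

noncomputable section

variable {ι : Type*} [Fintype ι]

/-- A (half-open) cube in `ℝ^ι` based at `a` with side length `s`. -/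
def cube (a : EuclideanSpace ℝ ι) (s : ℝ) : Set (EuclideanSpace ℝ ι) :=
  {x | ∀ i, a i ≤ x i ∧ x i < a i + s}

/-- Coordinatewise floor map. -/
def floorPt (x : EuclideanSpace ℝ ι) : EuclideanSpace ℝ ι := WithLp.toLp 2 (fun i => (⌊x i⌋ : ℝ))

/-- `⌊A⌋`, the image of `A` under the coordinatewise floor map. -/
def floorSet (A : Set (EuclideanSpace ℝ ι)) : Set (EuclideanSpace ℝ ι) := floorPt '' A

/-- The α-counting measure of `A`. -/
def countMeas (α : ℝ) (A : Set (EuclideanSpace ℝ ι)) : ℝ≥0∞ :=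
  ⨅ ℓ : ℝ, ⨆ (a : EuclideanSpace ℝ ι) (s : ℝ) (_ : ℓ ≤ s ∧ 0 < s),
    ((floorSet A ∩ cube a s).encard : ℝ≥0∞) / ENNReal.ofReal (s ^ α)

/-- The counting dimension of `A`. -/
def cdim (A : Set (EuclideanSpace ℝ ι)) : ℝ :=
  sInf {α : ℝ | 0 ≤ α ∧ countMeas α A = 0}

/-- The centered cube `[-ℓ, ℓ)^ι`. -/
def centeredCube (ℓ : ℝ) : Set (EuclideanSpace ℝ ι) :=
  cube (WithLp.toLp 2 (fun _ => -ℓ) : EuclideanSpace ℝ ι) (2 * ℓ)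

/-- The α-mass measure of `A`. -/
def massMeas (α : ℝ) (A : Set (EuclideanSpace ℝ ι)) : ℝ≥0∞ :=
  ⨅ L : ℝ, ⨆ (ℓ : ℝ) (_ : L ≤ ℓ ∧ 0 < ℓ),
    ((floorSet A ∩ centeredCube ℓ).encard : ℝ≥0∞) / ENNReal.ofReal ((2 * ℓ) ^ α)

/-- The (upper) mass dimension of `A`. -/
def mdim (A : Set (EuclideanSpace ℝ ι)) : ℝ :=
  sInf {α : ℝ | 0 ≤ α ∧ massMeas α A = 0}


/-- `f` is a `(K,M)`-quasi-isometric embedding of `B` (with the Euclidean metrics). -/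
def QIEOn {ι κ : Type*} [Fintype ι] [Fintype κ] (K M : ℝ) (B : Set (EuclideanSpace ℝ ι))
    (f : EuclideanSpace ℝ ι → EuclideanSpace ℝ κ) : Prop :=
  ∀ x₁ ∈ B, ∀ x₂ ∈ B,
    (1 / K) * dist x₁ x₂ - M ≤ dist (f x₁) (f x₂) ∧ dist (f x₁) (f x₂) ≤ K * dist x₁ x₂ + M

/-!
A quasi-isometric embedding `f` of `A` has a coarse inverse `f(A) → A`, so it suffices to bound
`C^α(B)` by `C^α(A)` whenever `Φ` quasi-isometrically embeds `A` with image `M`-dense in `B`.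
Pick for every lattice point `z ∈ ⌊B⌋` a point `x z ∈ A` with `Φ (x z)` close to `z`. The map
`z ↦ ⌊x z⌋` sends the lattice points of `⌊B⌋` in a cube of side `s ≥ 1` into a cube of side `L s`,
and its fibres have bounded diameter, hence at most `m` points. So each cube count of `B` is at
most `m` times a cube count of `A` at scale `L s`, and `C^α(B) ≤ m L^α C^α(A)`. Regularity and the
counting dimension only see whether `C^α` is `0` or `∞`, which two-sided bounds preserve.
-/

theorem Set.encard_le_encard_mul_of_fibers {β γ : Type*} {g : β → γ} {s : Set β} {t : Set γ}
    {m : ℕ} (hst : MapsTo g s t) (hfib : ∀ y ∈ t, (s ∩ g ⁻¹' {y}).encard ≤ m) :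
    s.encard ≤ t.encard * m := by
  rcases t.finite_or_infinite with ht | ht
  · calc s.encard ≤ (⋃ y ∈ ht.toFinset, s ∩ g ⁻¹' {y}).encard :=
          encard_le_encard fun x hx => mem_biUnion (by simpa using hst hx) ⟨hx, rfl⟩
      _ ≤ ∑ y ∈ ht.toFinset, (s ∩ g ⁻¹' {y}).encard := ht.toFinset.set_encard_biUnion_le _
      _ ≤ ∑ _y ∈ ht.toFinset, (m : ℕ∞) :=
          Finset.sum_le_sum fun y hy => hfib y (by simpa using hy)
      _ = t.encard * m := by simp [ht.encard_eq_coe_toFinset_card]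
  · rcases eq_or_ne m 0 with rfl | hm
    · have hs : s = ∅ := eq_empty_of_forall_notMem fun x hx => by
        simpa using (hfib _ (hst hx)).trans_lt' (encard_pos.2 ⟨x, hx, rfl⟩)
      simp [hs]
    · simp [ht.encard_eq, ENat.top_mul (Nat.cast_ne_zero.2 hm)]

theorem dist_le_sqrt_card_mul {x y : EuclideanSpace ℝ ι} {r : ℝ} (hr : 0 ≤ r)
    (h : ∀ i, dist (x i) (y i) ≤ r) : dist x y ≤ √(Fintype.card ι) * r := by
  rw [EuclideanSpace.dist_eq, ← Real.sqrt_sq hr, ← Real.sqrt_mul (Nat.cast_nonneg _)]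
  gcongr
  calc ∑ i, dist (x i) (y i) ^ 2 ≤ ∑ _i : ι, r ^ 2 := by gcongr with i; exact h i
    _ = Fintype.card ι * r ^ 2 := by simp

omit [Fintype ι] in
theorem cube_subset_cube {a : EuclideanSpace ℝ ι} {s t : ℝ} (h : s ≤ t) : cube a s ⊆ cube a t :=
  fun _ hx i => ⟨(hx i).1, (hx i).2.trans_le (by linarith)⟩

theorem mem_cube_of_dist_le {x p : EuclideanSpace ℝ ι} {r : ℝ} (h : dist x p ≤ r) :
    x ∈ cube (WithLp.toLp 2 fun i => p i - r) (2 * r + 1) := fun i => by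
  have := abs_le.1 ((Real.dist_eq _ _ ▸ PiLp.dist_apply_le x p i).trans h)
  constructor <;> simp <;> linarith

theorem dist_le_of_mem_cube {a x y : EuclideanSpace ℝ ι} {s : ℝ} (hs : 0 ≤ s)
    (hx : x ∈ cube a s) (hy : y ∈ cube a s) : dist x y ≤ √(Fintype.card ι) * s :=
  dist_le_sqrt_card_mul hs fun i => by
    rw [Real.dist_eq, abs_le]
    constructor <;> linarith [hx i, hy i]

omit [Fintype ι] in
@[simp]
theorem floorPt_apply (x : EuclideanSpace ℝ ι) (i : ι) : floorPt x i = ⌊x i⌋ := rfl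

omit [Fintype ι] in
theorem floorPt_mem_cube {x a : EuclideanSpace ℝ ι} {s : ℝ} (hx : x ∈ cube a s) :
    floorPt x ∈ cube (WithLp.toLp 2 fun i => a i - 1) (s + 1) := fun i => by
  constructor <;> simp <;> linarith [Int.lt_floor_add_one (x i), Int.floor_le (x i), hx i]

theorem dist_floorPt_le (x : EuclideanSpace ℝ ι) : dist (floorPt x) x ≤ √(Fintype.card ι) :=
  mul_one √(Fintype.card ι : ℝ) ▸ dist_le_sqrt_card_mul zero_le_one fun i => by
    rw [floorPt_apply, Real.dist_eq, abs_le]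
    constructor <;> linarith [Int.lt_floor_add_one (x i), Int.floor_le (x i)]

theorem dist_le_of_floorPt_eq {x y : EuclideanSpace ℝ ι} (h : floorPt x = floorPt y) :
    dist x y ≤ √(Fintype.card ι) :=
  mul_one √(Fintype.card ι : ℝ) ▸ dist_le_sqrt_card_mul zero_le_one fun i => by
    have hi : (⌊x i⌋ : ℝ) = ⌊y i⌋ := by simpa using congrArg (· i) h
    rw [Real.dist_eq, abs_le]
    constructor <;> linarith [Int.lt_floor_add_one (x i), Int.floor_le (x i),
      Int.lt_floor_add_one (y i), Int.floor_le (y i)]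

theorem encard_range_floorPt_inter_cube_le (a : EuclideanSpace ℝ ι) (s : ℝ) :
    (range floorPt ∩ cube a s).encard ≤ ((⌊s⌋ + 1).toNat ^ Fintype.card ι : ℕ) := by
  classical
  let toInt : EuclideanSpace ℝ ι → ι → ℤ := fun x i => ⌊x i⌋
  let box : Finset (ι → ℤ) := Fintype.piFinset fun i => Finset.Icc ⌈a i⌉ (⌈a i⌉ + ⌊s⌋)
  have hinj : InjOn toInt (range floorPt) := by
    rintro _ ⟨x, rfl⟩ _ ⟨y, rfl⟩ h
    ext i
    simpa [toInt] using congrFun h i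
  have hmaps : MapsTo toInt (range floorPt ∩ cube a s) box := by
    rintro _ ⟨⟨x, rfl⟩, hx⟩
    simp only [box, toInt, Finset.mem_coe, Fintype.mem_piFinset,
      Finset.mem_Icc, floorPt_apply, Int.floor_intCast]
    intro i
    have ⟨hlo, hhi⟩ := hx i
    simp only [floorPt_apply] at hlo hhi
    refine ⟨Int.ceil_le.2 hlo, ?_⟩
    have : ⌊x i⌋ - ⌈a i⌉ ≤ ⌊s⌋ := Int.le_floor.2 (by push_cast; linarith [Int.le_ceil (a i)])
    omega
  calc (range floorPt ∩ cube a s).encard = (toInt '' (range floorPt ∩ cube a s)).encard :=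
        (hinj.mono inter_subset_left).encard_image.symm
    _ ≤ (box : Set (ι → ℤ)).encard := encard_le_encard hmaps.image_subset
    _ = ((⌊s⌋ + 1).toNat ^ Fintype.card ι : ℕ) := by
        rw [encard_coe_eq_coe_finsetCard, Fintype.card_piFinset]
        simp [Int.card_Icc, add_assoc]

theorem encard_le_of_fiber_dist_le {β : Type*} {S : Set (EuclideanSpace ℝ ι)} {T : Set β}
    {g : EuclideanSpace ℝ ι → β} {ρ : ℝ} (hS : S ⊆ range floorPt) (hg : MapsTo g S T)
    (hρ : ∀ z ∈ S, ∀ z' ∈ S, g z = g z' → dist z z' ≤ ρ) :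
    S.encard ≤ T.encard * ((⌊2 * ρ + 1⌋ + 1).toNat ^ Fintype.card ι : ℕ) := by
  refine encard_le_encard_mul_of_fibers hg fun y _ => ?_
  rcases (S ∩ g ⁻¹' {y}).eq_empty_or_nonempty with h | ⟨z₁, hz₁, hz₁y⟩
  · simp [h]
  refine (encard_le_encard ?_).trans
    (encard_range_floorPt_inter_cube_le (WithLp.toLp 2 fun i => z₁ i - ρ) _)
  rintro z ⟨hz, hzy⟩
  exact ⟨hS hz, mem_cube_of_dist_le (hρ z hz z₁ hz₁ (hzy.trans hz₁y.symm))⟩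

namespace QIEOn

variable {κ : Type*} [Fintype κ] {K M : ℝ} {A : Set (EuclideanSpace ℝ ι)}
  {f : EuclideanSpace ℝ ι → EuclideanSpace ℝ κ}

theorem dist_map_le (hf : QIEOn K M A f) {x₁ x₂ : EuclideanSpace ℝ ι} (h₁ : x₁ ∈ A)
    (h₂ : x₂ ∈ A) : dist (f x₁) (f x₂) ≤ K * dist x₁ x₂ + M :=
  (hf x₁ h₁ x₂ h₂).2

theorem dist_le (hf : QIEOn K M A f) (hK : 0 < K) {x₁ x₂ : EuclideanSpace ℝ ι} (h₁ : x₁ ∈ A)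
    (h₂ : x₂ ∈ A) : dist x₁ x₂ ≤ K * (dist (f x₁) (f x₂) + M) := by
  have := (hf x₁ h₁ x₂ h₂).1
  rwa [one_div, sub_le_iff_le_add, inv_mul_le_iff₀ hK] at this

theorem mono (hf : QIEOn K M A f) {M' : ℝ} (h : M ≤ M') : QIEOn K M' A f := fun x₁ h₁ x₂ h₂ =>
  ⟨by linarith [(hf x₁ h₁ x₂ h₂).1], by linarith [(hf x₁ h₁ x₂ h₂).2]⟩

theorem invFunOn (hf : QIEOn K M A f) (hK : 1 ≤ K) (hM : 0 ≤ M) :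
    QIEOn K (K * M) (f '' A) (Function.invFunOn f A) := by
  rintro _ ⟨x₁, h₁, rfl⟩ _ ⟨x₂, h₂, rfl⟩
  have hy₁ := Function.invFunOn_pos (b := f x₁) ⟨x₁, h₁, rfl⟩
  have hy₂ := Function.invFunOn_pos (b := f x₂) ⟨x₂, h₂, rfl⟩
  have hupper := hf.dist_le (by linarith) hy₁.1 hy₂.1
  have hlower := hf.dist_map_le hy₁.1 hy₂.1
  rw [hy₁.2, hy₂.2] at hupper hlower
  have hKM : M ≤ K * M := le_mul_of_one_le_left hM hK
  refine ⟨?_, by linarith⟩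
  rw [one_div, sub_le_iff_le_add, inv_mul_le_iff₀ (by linarith)]
  nlinarith

end QIEOn

section Counting

variable {κ : Type*} [Fintype κ]

theorem exists_encard_floorSet_inter_cube_le {K M : ℝ} (hK : 1 ≤ K) (hM : 0 ≤ M) :
    ∃ L : ℝ, 1 ≤ L ∧ ∃ m : ℕ, ∀ (A : Set (EuclideanSpace ℝ ι)) (B : Set (EuclideanSpace ℝ κ))
      (Φ : EuclideanSpace ℝ ι → EuclideanSpace ℝ κ), QIEOn K M A Φ →
      (∀ y ∈ B, ∃ x ∈ A, dist (Φ x) y ≤ M) → ∀ (b : EuclideanSpace ℝ κ) (s : ℝ), 1 ≤ s →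
      ∃ a, (floorSet B ∩ cube b s).encard ≤ (floorSet A ∩ cube a (L * s)).encard * m := by
  set M' := M + √(Fintype.card κ)
  set R := K * (√(Fintype.card κ) + 2 * M' + M)
  set ρ := K * √(Fintype.card ι) + M + 2 * M'
  have hR : 0 ≤ R := by positivity
  refine ⟨2 * R + 2, by linarith, (⌊2 * ρ + 1⌋ + 1).toNat ^ Fintype.card κ,
    fun A B Φ hΦ hB b s hs => ?_⟩
  have hsection : ∀ z ∈ floorSet B, ∃ x ∈ A, dist (Φ x) z ≤ M' := by
    rintro _ ⟨w, hw, rfl⟩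
    obtain ⟨x, hx, hxw⟩ := hB w hw
    exact ⟨x, hx, (dist_triangle _ w _).trans
      (add_le_add hxw (dist_comm w (floorPt w) ▸ dist_floorPt_le w))⟩
  choose! x hxA hxz using hsection
  have hdist_x : ∀ z ∈ floorSet B, ∀ z' ∈ floorSet B,
      dist (x z) (x z') ≤ K * (dist z z' + 2 * M' + M) := fun z hz z' hz' => by
    have := dist_triangle4 (Φ (x z)) z z' (Φ (x z'))
    have := hΦ.dist_le (by linarith) (hxA z hz) (hxA z' hz')
    nlinarith [hxz z hz, dist_comm z' (Φ (x z')) ▸ hxz z' hz']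
  have hdist_z : ∀ z ∈ floorSet B, ∀ z' ∈ floorSet B,
      dist z z' ≤ K * dist (x z) (x z') + M + 2 * M' := fun z hz z' hz' => by
    have := dist_triangle4 z (Φ (x z)) (Φ (x z')) z'
    have := hΦ.dist_map_le (hxA z hz) (hxA z' hz')
    linarith [dist_comm z (Φ (x z)) ▸ hxz z hz, hxz z' hz']
  rcases (floorSet B ∩ cube b s).eq_empty_or_nonempty with hS | ⟨z₀, hz₀⟩
  · exact ⟨0, by simp [hS]⟩
  -- `z ↦ ⌊x z⌋` maps `⌊B⌋ ∩ cube b s` into a cube of side `(2 R + 2) s`, with fibres of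
  -- diameter at most `ρ`.
  refine ⟨WithLp.toLp 2 fun i => x z₀ i - R * s - 1,
    encard_le_of_fiber_dist_le (g := fun z => floorPt (x z)) ?_ ?_ ?_⟩
  · exact inter_subset_left.trans (image_subset_range _ _)
  · intro z hz
    have hdiam : dist (x z) (x z₀) ≤ R * s := by
      have := dist_le_of_mem_cube (by linarith) hz.2 hz₀.2
      have := hdist_x z hz.1 z₀ hz₀.1
      have : 2 * M' + M ≤ (2 * M' + M) * s := le_mul_of_one_le_right (by positivity) hs
      nlinarith
    refine ⟨mem_image_of_mem _ (hxA z hz.1), cube_subset_cube ?_ (floorPt_mem_cube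
      (mem_cube_of_dist_le hdiam))⟩
    nlinarith
  · intro z hz z' hz' hzz'
    have := hdist_z z hz.1 z' hz'.1
    have := dist_le_of_floorPt_eq hzz'
    nlinarith

omit [Fintype ι] [Fintype κ] in
theorem countMeas_le_of_encard_le {α L : ℝ} {m : ℕ} {A : Set (EuclideanSpace ℝ ι)}
    {B : Set (EuclideanSpace ℝ κ)} (hL : 1 ≤ L)
    (h : ∀ (b : EuclideanSpace ℝ κ) (s : ℝ), 1 ≤ s →
      ∃ a, (floorSet B ∩ cube b s).encard ≤ (floorSet A ∩ cube a (L * s)).encard * m) :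
    countMeas α B ≤ ENNReal.ofReal (m * L ^ α) * countMeas α A := by
  have hLα : 0 < L ^ α := Real.rpow_pos_of_pos (by linarith) α
  rw [countMeas, countMeas, ENNReal.mul_iInf fun h => absurd h ENNReal.ofReal_ne_top]
  refine le_iInf fun ℓ => (iInf_le _ (max ℓ 1)).trans <|
    iSup₂_le fun b s => iSup_le fun ⟨hℓs, hs⟩ => ?_
  obtain ⟨a, ha⟩ := h b s (le_of_max_le_right hℓs)
  have hLs : ℓ ≤ L * s ∧ 0 < L * s :=
    ⟨(le_of_max_le_left hℓs).trans (le_mul_of_one_le_left hs.le hL), by positivity⟩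
  calc ((floorSet B ∩ cube b s).encard : ℝ≥0∞) / ENNReal.ofReal (s ^ α)
      ≤ ((floorSet A ∩ cube a (L * s)).encard * m : ℝ≥0∞) / ENNReal.ofReal (s ^ α) := by
        gcongr
        exact_mod_cast ha
    _ = ENNReal.ofReal (m * L ^ α) *
          ((floorSet A ∩ cube a (L * s)).encard / ENNReal.ofReal ((L * s) ^ α)) := by
        rw [Real.mul_rpow (by linarith) hs.le, ENNReal.ofReal_mul (by positivity),
          ENNReal.ofReal_mul hLα.le, mul_assoc, ← mul_div_assoc,
          ENNReal.mul_div_mul_left _ _ (by positivity) ENNReal.ofReal_ne_top]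
        simp [mul_comm, mul_div_assoc]
    _ ≤ _ := by
        gcongr
        exact le_iSup₂_of_le a (L * s) (le_iSup_of_le hLs le_rfl)

theorem exists_countMeas_le_mul (α : ℝ) {K M : ℝ} (hK : 1 ≤ K) (hM : 0 ≤ M) :
    ∃ c : ℝ, 1 ≤ c ∧ ∀ (A : Set (EuclideanSpace ℝ ι)) (B : Set (EuclideanSpace ℝ κ))
      (Φ : EuclideanSpace ℝ ι → EuclideanSpace ℝ κ), QIEOn K M A Φ →
      (∀ y ∈ B, ∃ x ∈ A, dist (Φ x) y ≤ M) →
      countMeas α B ≤ ENNReal.ofReal c * countMeas α A := by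
  obtain ⟨L, hL, m, H⟩ := exists_encard_floorSet_inter_cube_le (ι := ι) (κ := κ) hK hM
  refine ⟨max 1 (m * L ^ α), le_max_left _ _, fun A B Φ hΦ hB => ?_⟩
  refine (countMeas_le_of_encard_le hL (H A B Φ hΦ hB)).trans ?_
  gcongr
  exact le_max_right _ _

theorem exists_countMeas_le_mul_image (α : ℝ) {K M : ℝ} (hK : 1 ≤ K) (hM : 0 ≤ M) :
    ∃ c : ℝ, 1 ≤ c ∧ ∀ (A : Set (EuclideanSpace ℝ ι))
      (f : EuclideanSpace ℝ ι → EuclideanSpace ℝ κ), QIEOn K M A f →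
      countMeas α A ≤ ENNReal.ofReal c * countMeas α (f '' A) ∧
      countMeas α (f '' A) ≤ ENNReal.ofReal c * countMeas α A := by
  have hKM : M ≤ K * M := le_mul_of_one_le_left hM hK
  obtain ⟨c₁, hc₁, H₁⟩ := exists_countMeas_le_mul (ι := ι) (κ := κ) α hK (hM.trans hKM)
  obtain ⟨c₂, hc₂, H₂⟩ := exists_countMeas_le_mul (ι := κ) (κ := ι) α hK (hM.trans hKM)
  refine ⟨max c₁ c₂, hc₁.trans (le_max_left _ _), fun A f hf => ⟨?_, ?_⟩⟩
  · have hcover : ∀ x ∈ A, ∃ y ∈ f '' A, dist (Function.invFunOn f A y) x ≤ K * M := by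
      intro x hx
      have hy := Function.invFunOn_pos (b := f x) ⟨x, hx, rfl⟩
      exact ⟨f x, mem_image_of_mem f hx, by simpa [hy.2] using hf.dist_le (by linarith) hy.1 hx⟩
    refine (H₂ _ A _ (hf.invFunOn hK hM) hcover).trans ?_
    gcongr
    exact le_max_right _ _
  · have hcover : ∀ y ∈ f '' A, ∃ x ∈ A, dist (f x) y ≤ K * M := by
      rintro _ ⟨x, hx, rfl⟩
      exact ⟨x, hx, by simpa using hM.trans hKM⟩
    refine (H₁ A _ f (hf.mono hKM) hcover).trans ?_
    gcongr
    exact le_max_left _ _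

end Counting

theorem ENNReal.eq_zero_iff_of_le_mul {a b c : ℝ≥0∞} (hab : a ≤ c * b) (hba : b ≤ c * a) :
    a = 0 ↔ b = 0 :=
  ⟨fun h => by simpa [h] using hba, fun h => by simpa [h] using hab⟩

theorem ENNReal.lt_top_iff_of_le_mul {a b c : ℝ≥0∞} (hc : c ≠ ⊤) (hab : a ≤ c * b)
    (hba : b ≤ c * a) : a < ⊤ ↔ b < ⊤ :=
  ⟨fun h => hba.trans_lt (mul_lt_top hc.lt_top h), fun h => hab.trans_lt (mul_lt_top hc.lt_top h)⟩

omit [Fintype ι] in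
theorem cdim_eq_of_countMeas_eq_zero_iff {κ : Type*} {A : Set (EuclideanSpace ℝ ι)}
    {B : Set (EuclideanSpace ℝ κ)} (h : ∀ β, 0 ≤ β → (countMeas β A = 0 ↔ countMeas β B = 0)) :
    cdim A = cdim B := by
  simp only [cdim]
  congr 1
  ext β
  exact and_congr_right (h β)

theorem stmt_7_general (k d : ℕ) (α K M : ℝ) (hK : 1 ≤ K) (hM : 0 ≤ M) :
    ∃ c : ℝ, 1 ≤ c ∧ ∀ (A : Set (EuclideanSpace ℝ (Fin k)))
      (f : EuclideanSpace ℝ (Fin k) → EuclideanSpace ℝ (Fin d)), QIEOn K M A f →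
      countMeas α A ≤ ENNReal.ofReal c * countMeas α (f '' A) ∧
      countMeas α (f '' A) ≤ ENNReal.ofReal c * countMeas α A ∧
      ((0 < countMeas α A ∧ countMeas α A < ⊤) ↔
        (0 < countMeas α (f '' A) ∧ countMeas α (f '' A) < ⊤)) ∧
      cdim A = cdim (f '' A) := by
  have comparison := fun β => exists_countMeas_le_mul_image (ι := Fin k) (κ := Fin d) β hK hM
  obtain ⟨c, hc, H⟩ := comparison α
  refine ⟨c, hc, fun A f hf => ?_⟩
  obtain ⟨h₁, h₂⟩ := H A f hf
  refine ⟨h₁, h₂, ?_, cdim_eq_of_countMeas_eq_zero_iff fun β _ => ?_⟩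
  · rw [pos_iff_ne_zero, pos_iff_ne_zero, Ne, Ne, ENNReal.eq_zero_iff_of_le_mul h₁ h₂,
      ENNReal.lt_top_iff_of_le_mul ENNReal.ofReal_ne_top h₁ h₂]
  · obtain ⟨c', -, H'⟩ := comparison β
    exact ENNReal.eq_zero_iff_of_le_mul (H' A f hf).1 (H' A f hf).2

/-- Invariance of the counting measures (up to a multiplicative constant depending only on
`α, k, d, K, M`), of `α`-counting regularity, and of the counting dimension under
`(K,M)`-quasi-isometric embeddings. -/
theorem stmt_7 (k d : ℕ) (hk : 1 ≤ k) (hd : 1 ≤ d) (α K M : ℝ) (hα : 0 ≤ α)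
    (hK : 1 ≤ K) (hM : 0 ≤ M) :
    ∃ c : ℝ, 1 ≤ c ∧ ∀ (A : Set (EuclideanSpace ℝ (Fin k)))
      (f : EuclideanSpace ℝ (Fin k) → EuclideanSpace ℝ (Fin d)), QIEOn K M A f →
      countMeas α A ≤ ENNReal.ofReal c * countMeas α (f '' A) ∧
      countMeas α (f '' A) ≤ ENNReal.ofReal c * countMeas α A ∧
      ((0 < countMeas α A ∧ countMeas α A < ⊤) ↔
        (0 < countMeas α (f '' A) ∧ countMeas α (f '' A) < ⊤)) ∧
      cdim A = cdim (f '' A) :=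
  stmt_7_general k d α K M hK hM

end
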